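/- arXiv:1207.0673 — 2 statements merged into one kernel-verified Lean document; each statement's English description precedes it below -/
import Mathlib

section
/- The coupling map Ψ_O for the occupancy process is non-decreasing with respect to the partial order ⪯ on occupancy distributions: for all o, o' ∈ 𝒫^m_{ℓ+1} with o ⪯ o', and every r ∈ ℛ, one has Ψ_O(o,r) ⪯ Ψ_O(o',r). -/
open Finset

/-- Lumped sharp peak fitness `A_H`. -/
noncomputable def AH (σ : ℝ) (b : ℕ) : ℝ := if b = 0 then σ else 1

/-- Mutation coupling map `ℳ_H(b, u₁,…,u_ℓ)`. -/
noncomputable def McoupH (κ ℓ : ℕ) (q : ℝ) (b : ℕ) (u : Fin ℓ → ℝ) : ℕ :=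
  b - (univ.filter fun k : Fin ℓ => (k : ℕ) < b ∧ u k < q / ((κ : ℝ) - 1)).card
    + (univ.filter fun k : Fin ℓ => b ≤ (k : ℕ) ∧ 1 - q < u k).card

/-- Selection map `S_O(o,s)`: the unique `l` with
`(Σ_{h<l} o(h)A_H(h))/T ≤ s < (Σ_{h≤l} o(h)A_H(h))/T`, characterized as the least `l`
such that `s·T < Σ_{h≤l} o(h)A_H(h)`. -/
noncomputable def SO (σ : ℝ) (ℓ : ℕ) (o : ℕ → ℕ) (s : ℝ) : ℕ :=
  sInf {l : ℕ |
    s * ∑ h ∈ range (ℓ + 1), (o h : ℝ) * AH σ h < ∑ h ∈ range (l + 1), (o h : ℝ) * AH σ h}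

/-- Occupancy distribution `𝒪_H(d)` of a distance vector `d`. -/
def occOf {m : ℕ} (d : Fin m → ℕ) (l : ℕ) : ℕ := (univ.filter fun i => d i = l).card

/-- Coupling map `Ψ_O` of the occupancy process. The random input `r` is a matrix in
`ℛ = [0,1)^{m×(ℓ+1)}`: column `0` drives the selection, columns `1,…,ℓ` the mutations. -/
noncomputable def PsiO (κ ℓ m : ℕ) (q σ : ℝ)
    (o : ℕ → ℕ) (r : Fin m → Fin (ℓ + 1) → ℝ) : ℕ → ℕ :=
  occOf (fun i : Fin m => McoupH κ ℓ q (SO σ ℓ o (r i 0)) (fun j => r i j.succ))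

/-- The partial order `⪯` on occupancy distributions. -/
def occLE (ℓ : ℕ) (o o' : ℕ → ℕ) : Prop :=
  ∀ l ≤ ℓ, ∑ h ∈ range (l + 1), o h ≤ ∑ h ∈ range (l + 1), o' h

/-!
The new distance of individual `i` is `ℳ_H(S_O(o, r i 0), r i ·)`, so it suffices that
`S_O(·, s)` is antitone in `o` and `ℳ_H(·, u)` is monotone in `b`; then every individual ends up
at least as close to the master sequence under `o'` as under `o`, which only raises the
prefix counts of the occupancy distribution.

Since only distance `0` carries the extra fitness `σ ≥ 1`, the cumulative selection
probabilities of `o'` dominate those of `o` whenever `o ⪯ o'`, hence the quantile `S_O(o', s)`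
lies below `S_O(o, s)`. The map `ℳ_H(b, u)` counts mismatched sites after mutation, and the
status of each site is monotone in `b` because `q / (κ - 1) < 1 - q`.
-/

/-- Whether site `k` is mismatched after mutation, the sites `k < b` being mismatched before. -/
noncomputable def mismatchAfterMutation (κ ℓ : ℕ) (q : ℝ) (b : ℕ) (u : Fin ℓ → ℝ) (k : Fin ℓ) :
    ℕ :=
  if (k : ℕ) < b then (if u k < q / ((κ : ℝ) - 1) then 0 else 1)
  else (if 1 - q < u k then 1 else 0)

theorem McoupH_eq_sum_mismatchAfterMutation (κ ℓ : ℕ) (q : ℝ) (b : ℕ) (u : Fin ℓ → ℝ) :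
    McoupH κ ℓ q b u = (b - ℓ) + ∑ k, mismatchAfterMutation κ ℓ q b u k := by
  have hsite : ∀ k : Fin ℓ,
      mismatchAfterMutation κ ℓ q b u k + (if (k : ℕ) < b ∧ u k < q / ((κ : ℝ) - 1) then 1 else 0)
        = (if (k : ℕ) < b then 1 else 0) + (if b ≤ (k : ℕ) ∧ 1 - q < u k then 1 else 0) := by
    intro k
    unfold mismatchAfterMutation
    by_cases hk : (k : ℕ) < b <;> by_cases hlo : u k < q / ((κ : ℝ) - 1) <;>
      by_cases hhi : 1 - q < u k <;> simp [hk, hlo, hhi]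
  have hcount : ∑ k, mismatchAfterMutation κ ℓ q b u k
        + #{k : Fin ℓ | (k : ℕ) < b ∧ u k < q / ((κ : ℝ) - 1)}
      = min ℓ b + #{k : Fin ℓ | b ≤ (k : ℕ) ∧ 1 - q < u k} := by
    rw [← Fin.card_filter_val_lt, card_filter, card_filter, card_filter,
      ← sum_add_distrib, ← sum_add_distrib]
    exact sum_congr rfl fun k _ => hsite k
  have hrepaired : #{k : Fin ℓ | (k : ℕ) < b ∧ u k < q / ((κ : ℝ) - 1)} ≤ min ℓ b :=
    Fin.card_filter_val_lt (n := ℓ) (m := b) ▸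
      card_le_card (monotone_filter_right _ fun _ _ hk => hk.1)
  unfold McoupH
  omega

theorem McoupH_monotone {κ ℓ : ℕ} {q : ℝ} (hq : q / ((κ : ℝ) - 1) < 1 - q) (u : Fin ℓ → ℝ) :
    Monotone fun b => McoupH κ ℓ q b u := by
  intro b b' hb
  simp only [McoupH_eq_sum_mismatchAfterMutation]
  refine add_le_add (Nat.sub_le_sub_right hb ℓ) (sum_le_sum fun k _ => ?_)
  unfold mismatchAfterMutation
  by_cases hk : (k : ℕ) < b
  · simp [hk, hk.trans_le hb]
  · split_ifs <;> first | omega | linarith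

theorem sum_range_mul_AH (σ : ℝ) (o : ℕ → ℕ) (l : ℕ) :
    ∑ h ∈ range (l + 1), (o h : ℝ) * AH σ h
      = ((∑ h ∈ range (l + 1), o h : ℕ) : ℝ) + (σ - 1) * o 0 := by
  simp only [sum_range_succ', AH, if_pos, Nat.succ_ne_zero, if_false, mul_one]
  push_cast
  ring

theorem sInf_lt_le_sInf_lt {F G : ℕ → ℝ} {ℓ : ℕ} (hF : 0 < F ℓ) (hG : 0 < G ℓ)
    (hFG : ∀ l ≤ ℓ, F l * G ℓ ≤ G l * F ℓ) {s : ℝ} (hs : s < 1) :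
    sInf {l | s * G ℓ < G l} ≤ sInf {l | s * F ℓ < F l} := by
  have hℓ : ℓ ∈ {l | s * F ℓ < F l} := by
    show s * F ℓ < F ℓ
    nlinarith
  set L := sInf {l | s * F ℓ < F l}
  have hL : s * F ℓ < F L := Nat.sInf_mem ⟨ℓ, hℓ⟩
  apply Nat.sInf_le
  show s * G ℓ < G L
  have := hFG L (Nat.sInf_le hℓ)
  nlinarith [mul_lt_mul_of_pos_right hL hG]

theorem prefix_mul_total_le {P P' a a' M c : ℝ} (hc : 0 ≤ c) (ha : 0 ≤ a) (haa' : a ≤ a')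
    (hPP' : P ≤ P') (hP'M : P' ≤ M) (hM : 0 ≤ M) :
    (P + c * a) * (M + c * a') ≤ (P' + c * a') * (M + c * a) := by
  -- the difference is `(P' - P) * (M + c * a) + c * (a' - a) * (M - P)`
  nlinarith [mul_nonneg (sub_nonneg.2 hPP') (by positivity : 0 ≤ M + c * a),
    mul_nonneg (mul_nonneg hc (sub_nonneg.2 haa')) (sub_nonneg.2 (hPP'.trans hP'M))]

theorem SO_antitone {σ : ℝ} (hσ : 1 ≤ σ) {ℓ m : ℕ} (hm : 0 < m) {o o' : ℕ → ℕ}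
    (ho : ∑ h ∈ range (ℓ + 1), o h = m) (ho' : ∑ h ∈ range (ℓ + 1), o' h = m)
    (hoo' : occLE ℓ o o') {s : ℝ} (hs : s < 1) :
    SO σ ℓ o' s ≤ SO σ ℓ o s := by
  have hpos : ∀ o : ℕ → ℕ, ∑ h ∈ range (ℓ + 1), o h = m →
      0 < ∑ h ∈ range (ℓ + 1), (o h : ℝ) * AH σ h := fun o ho => by
    rw [sum_range_mul_AH, ho]
    have : (0 : ℝ) < m := by exact_mod_cast hm
    have : (0 : ℝ) ≤ σ - 1 := by linarith
    positivity
  refine sInf_lt_le_sInf_lt (F := fun l => ∑ h ∈ range (l + 1), (o h : ℝ) * AH σ h)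
    (G := fun l => ∑ h ∈ range (l + 1), (o' h : ℝ) * AH σ h)
    (hpos o ho) (hpos o' ho') (fun l hl => ?_) hs
  simp only [sum_range_mul_AH, ho, ho']
  have hprefix : ∑ h ∈ range (l + 1), o' h ≤ m :=
    ho' ▸ sum_le_sum_of_subset (range_subset_range.2 (by omega))
  have hzero : o 0 ≤ o' 0 := by simpa using hoo' 0 (Nat.zero_le ℓ)
  exact prefix_mul_total_le (by linarith) (Nat.cast_nonneg _) (by exact_mod_cast hzero)
    (by exact_mod_cast hoo' l hl) (by exact_mod_cast hprefix) (Nat.cast_nonneg _)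

theorem sum_range_occOf {m : ℕ} (d : Fin m → ℕ) (l : ℕ) :
    ∑ h ∈ range (l + 1), occOf d h = #{i | d i ≤ l} := by
  simp only [occOf, sum_card_fiberwise_eq_card_filter, mem_range, Nat.lt_succ_iff]

theorem occLE_occOf_of_le {m : ℕ} {d d' : Fin m → ℕ} (hd : ∀ i, d' i ≤ d i) (ℓ : ℕ) :
    occLE ℓ (occOf d) (occOf d') := fun l _ => by
  simp only [sum_range_occOf]
  exact card_le_card (monotone_filter_right _ fun i _ hi => (hd i).trans hi)

theorem div_sub_one_lt_one_sub {κ : ℕ} (hκ : 2 ≤ κ) {q : ℝ} (hq : q < 1 - 1 / κ) :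
    q / ((κ : ℝ) - 1) < 1 - q := by
  have hκ' : (2 : ℝ) ≤ κ := by exact_mod_cast hκ
  have hqκ := mul_lt_mul_of_pos_right hq (by linarith : (0 : ℝ) < κ)
  rw [sub_mul, one_div_mul_cancel (by positivity), one_mul] at hqκ
  rw [div_lt_iff₀ (by linarith)]
  linarith

theorem PsiO_monotone_general (κ ℓ m : ℕ) (hκ : 2 ≤ κ)
    (q σ : ℝ) (hq1 : q < 1 - 1 / κ) (hσ : 1 < σ)
    (o o' : ℕ → ℕ)
    (ho : ∑ h ∈ range (ℓ + 1), o h = m) (ho' : ∑ h ∈ range (ℓ + 1), o' h = m)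
    (hoo' : occLE ℓ o o')
    (r : Fin m → Fin (ℓ + 1) → ℝ) (hr : ∀ i j, 0 ≤ r i j ∧ r i j < 1) :
    occLE ℓ (PsiO κ ℓ m q σ o r) (PsiO κ ℓ m q σ o' r) :=
  occLE_occOf_of_le (fun i => McoupH_monotone (div_sub_one_lt_one_sub hκ hq1) _
    (SO_antitone hσ.le i.pos ho ho' hoo' (hr i 0).2)) ℓ

/-- The coupling map `Ψ_O` of the occupancy process is non-decreasing with respect
to the partial order `⪯` on occupancy distributions. -/
theorem PsiO_monotone (κ ℓ m : ℕ) (hκ : 2 ≤ κ) (hℓ : 1 ≤ ℓ) (hm : 1 ≤ m)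
    (q σ : ℝ) (hq0 : 0 < q) (hq1 : q < 1 - 1 / κ) (hσ : 1 < σ)
    (o o' : ℕ → ℕ)
    (hov : ∀ h, ℓ < h → o h = 0) (ho'v : ∀ h, ℓ < h → o' h = 0)
    (ho : ∑ h ∈ range (ℓ + 1), o h = m) (ho' : ∑ h ∈ range (ℓ + 1), o' h = m)
    (hoo' : occLE ℓ o o')
    (r : Fin m → Fin (ℓ + 1) → ℝ) (hr : ∀ i j, 0 ≤ r i j ∧ r i j < 1) :
    occLE ℓ (PsiO κ ℓ m q σ o r) (PsiO κ ℓ m q σ o' r) :=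
  PsiO_monotone_general κ ℓ m hκ q σ hq1 hσ o o' ho ho' hoo' r hr
end

section
/- (Upper bound on the probability of reaching Hamming class 0.) For every integer n ≥ 0 and every b ∈ {0,…,ℓ}, the n-step lumped mutation probability satisfies (M_H^n)(b,0) ≤ ℬ(0)/ℬ(b), where M_H^n denotes the n-th matrix power of M_H and ℬ is the binomial law ℬ(ℓ, 1−1/κ). -/
open Finset

/-- Lumped mutation matrix `M_H(b,c)`. -/
noncomputable def MH (κ ℓ : ℕ) (q : ℝ) (b c : ℕ) : ℝ :=
  ∑ k ∈ range (ℓ - b + 1), ∑ l ∈ range (b + 1),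
    if (k : ℤ) - (l : ℤ) = (c : ℤ) - (b : ℤ) then
      ((ℓ - b).choose k : ℝ) * (b.choose l : ℝ) * q ^ k * (1 - q) ^ (ℓ - b - k) *
        (q / ((κ : ℝ) - 1)) ^ l * (1 - q / ((κ : ℝ) - 1)) ^ (b - l)
    else 0

/-- `n`-th matrix power of the lumped mutation matrix, on `{0,…,ℓ}`. -/
noncomputable def MHpow (κ ℓ : ℕ) (q : ℝ) : ℕ → ℕ → ℕ → ℝ
  | 0 => fun b c => if b = c then 1 else 0
  | n + 1 => fun b c => ∑ k ∈ range (ℓ + 1), MHpow κ ℓ q n b k * MH κ ℓ q k c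

/-- The binomial law `ℬ(ℓ, 1−1/κ)`. -/
noncomputable def Bbin (κ ℓ : ℕ) (b : ℕ) : ℝ :=
  (ℓ.choose b : ℝ) * (1 - 1 / κ) ^ b * (1 / κ) ^ (ℓ - b)


lemma choose_quad {ℓ b k l : ℕ} (hb : b ≤ ℓ) (hk : b + k ≤ ℓ) (hl : l ≤ b) :
    ℓ.choose b * (ℓ - b).choose k * b.choose l
      = ℓ.choose (b + k - l) * (ℓ - (b + k - l)).choose l * (b + k - l).choose k := by
  set c := b + k - l with hc
  have h1 : ℓ - c - l = ℓ - b - k := by omega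
  have h2 : c - k = b - l := by omega
  have hk' : k ≤ ℓ - b := by omega
  have hcℓ : c ≤ ℓ := by omega
  have hkc : k ≤ c := by omega
  have hlc : l ≤ ℓ - c := by omega
  have A := Nat.choose_mul_factorial_mul_factorial hk'
  have B := Nat.choose_mul_factorial_mul_factorial hl
  have C := Nat.choose_mul_factorial_mul_factorial hb
  have A' := Nat.choose_mul_factorial_mul_factorial hlc
  have B' := Nat.choose_mul_factorial_mul_factorial hkc
  have C' := Nat.choose_mul_factorial_mul_factorial hcℓ
  have hpos : 0 < k.factorial * (ℓ - b - k).factorial * (l.factorial * (b - l).factorial) := by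
    positivity
  apply Nat.eq_of_mul_eq_mul_right hpos
  calc ℓ.choose b * (ℓ - b).choose k * b.choose l *
        (k.factorial * (ℓ - b - k).factorial * (l.factorial * (b - l).factorial))
      = ℓ.choose b * ((ℓ - b).choose k * k.factorial * (ℓ - b - k).factorial) *
        (b.choose l * l.factorial * (b - l).factorial) := by ring
    _ = ℓ.choose b * (ℓ - b).factorial * b.factorial := by rw [A, B]
    _ = ℓ.factorial := by rw [mul_right_comm]; exact C
    _ = ℓ.choose c * (ℓ - c).factorial * c.factorial := by rw [mul_right_comm]; exact C'.symm
    _ = ℓ.choose c * ((ℓ - c).choose l * l.factorial * (ℓ - c - l).factorial) *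
        (c.choose k * k.factorial * (c - k).factorial) := by rw [A', B']
    _ = ℓ.choose c * (ℓ - c).choose l * c.choose k *
        (k.factorial * (ℓ - b - k).factorial * (l.factorial * (b - l).factorial)) := by
        rw [h1, h2]; ring

lemma analytic (r q p : ℝ) (hq : q = p * (r - 1)) (hr : 1 - 1 / r = (r - 1) * (1 / r))
    (b c k l u v : ℕ) (h1 : b + u = c + v) (h2 : b + k = c + l) :
    (1 - 1 / r) ^ b * (1 / r) ^ u * (q ^ k * p ^ l)
      = (1 - 1 / r) ^ c * (1 / r) ^ v * (q ^ l * p ^ k) := by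
  subst hq
  rw [hr]
  calc ((r - 1) * (1 / r)) ^ b * (1 / r) ^ u * ((p * (r - 1)) ^ k * p ^ l)
      = (r - 1) ^ (b + k) * (1 / r) ^ (b + u) * p ^ (k + l) := by
        rw [mul_pow, mul_pow, pow_add, pow_add, pow_add]; ring
    _ = (r - 1) ^ (c + l) * (1 / r) ^ (c + v) * p ^ (k + l) := by rw [h1, h2]
    _ = ((r - 1) * (1 / r)) ^ c * (1 / r) ^ v * ((p * (r - 1)) ^ l * p ^ k) := by
        rw [mul_pow, mul_pow, pow_add, pow_add, pow_add]; ring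

lemma MH_ext (κ ℓ : ℕ) (q : ℝ) {b : ℕ} (hb : b ≤ ℓ) (c : ℕ) :
    MH κ ℓ q b c = ∑ k ∈ range (ℓ + 1), ∑ l ∈ range (ℓ + 1),
      if (k : ℤ) - (l : ℤ) = (c : ℤ) - (b : ℤ) then
        ((ℓ - b).choose k : ℝ) * (b.choose l : ℝ) * q ^ k * (1 - q) ^ (ℓ - b - k) *
          (q / ((κ : ℝ) - 1)) ^ l * (1 - q / ((κ : ℝ) - 1)) ^ (b - l)
      else 0 := by
  rw [MH]
  have h1 : ∀ k : ℕ, (∑ l ∈ range (b + 1),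
      if (k : ℤ) - (l : ℤ) = (c : ℤ) - (b : ℤ) then
        ((ℓ - b).choose k : ℝ) * (b.choose l : ℝ) * q ^ k * (1 - q) ^ (ℓ - b - k) *
          (q / ((κ : ℝ) - 1)) ^ l * (1 - q / ((κ : ℝ) - 1)) ^ (b - l)
      else 0) = ∑ l ∈ range (ℓ + 1),
      if (k : ℤ) - (l : ℤ) = (c : ℤ) - (b : ℤ) then
        ((ℓ - b).choose k : ℝ) * (b.choose l : ℝ) * q ^ k * (1 - q) ^ (ℓ - b - k) *
          (q / ((κ : ℝ) - 1)) ^ l * (1 - q / ((κ : ℝ) - 1)) ^ (b - l)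
      else 0 := by
    intro k
    apply Finset.sum_subset
    · exact Finset.range_subset_range.2 (by omega)
    · intro l _ hl
      have : b < l := by
        have h2 : ¬ (l < b + 1) := fun h => hl (mem_range.2 h); omega
      simp [Nat.choose_eq_zero_of_lt this]
  simp only [h1]
  apply Finset.sum_subset
  · exact Finset.range_subset_range.2 (by omega)
  · intro k _ hk
    have : ℓ - b < k := by
      have h2 : ¬ (k < ℓ - b + 1) := fun h => hk (mem_range.2 h); omega
    simp [Nat.choose_eq_zero_of_lt this]

lemma choose_quad' {ℓ b c k l : ℕ} (hb : b ≤ ℓ) (hk : b + k ≤ ℓ) (hl : l ≤ b)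
    (hc : c + l = b + k) :
    ℓ.choose b * (ℓ - b).choose k * b.choose l
      = ℓ.choose c * (ℓ - c).choose l * c.choose k := by
  have : c = b + k - l := by omega
  subst this
  exact choose_quad hb hk hl

lemma MH_rev (κ ℓ : ℕ) (q : ℝ) (hκ : 2 ≤ κ) {b c : ℕ} (hb : b ≤ ℓ) (hc : c ≤ ℓ) :
    Bbin κ ℓ b * MH κ ℓ q b c = Bbin κ ℓ c * MH κ ℓ q c b := by
  have hκR : (2 : ℝ) ≤ (κ : ℝ) := by exact_mod_cast hκ
  have hκ0 : (κ : ℝ) ≠ 0 := by linarith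
  have hκ1 : (κ : ℝ) - 1 ≠ 0 := by linarith
  rw [MH_ext κ ℓ q hb c, MH_ext κ ℓ q hc b]
  simp only [Finset.mul_sum]
  conv_rhs => rw [Finset.sum_comm]
  apply Finset.sum_congr rfl
  intro k hk
  apply Finset.sum_congr rfl
  intro l hl
  have hkℓ : k ≤ ℓ := by have := mem_range.1 hk; omega
  have hlℓ : l ≤ ℓ := by have := mem_range.1 hl; omega
  have hiff : ((l : ℤ) - (k : ℤ) = (b : ℤ) - (c : ℤ)) ↔ ((k : ℤ) - (l : ℤ) = (c : ℤ) - (b : ℤ)) := by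
    omega
  rw [if_congr hiff rfl rfl]
  split_ifs with h
  · -- main case
    by_cases hbk : b + k ≤ ℓ
    · by_cases hlb : l ≤ b
      · have hcl : c + l = b + k := by omega
        have e1 : ℓ - c - l = ℓ - b - k := by omega
        have e2 : c - k = b - l := by omega
        have hA : ((ℓ.choose b : ℝ) * ((ℓ - b).choose k : ℝ) * (b.choose l : ℝ))
            = (ℓ.choose c : ℝ) * ((ℓ - c).choose l : ℝ) * (c.choose k : ℝ) := by
          exact_mod_cast congrArg (Nat.cast (R := ℝ)) (choose_quad' hb hbk hlb hcl)
        have hB : (1 - 1 / (κ : ℝ)) ^ b * (1 / (κ : ℝ)) ^ (ℓ - b) *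
              (q ^ k * (q / ((κ : ℝ) - 1)) ^ l)
            = (1 - 1 / (κ : ℝ)) ^ c * (1 / (κ : ℝ)) ^ (ℓ - c) *
              (q ^ l * (q / ((κ : ℝ) - 1)) ^ k) := by
          apply analytic
          · field_simp
          · field_simp
          · omega
          · omega
        rw [Bbin, Bbin, e1, e2]
        calc (ℓ.choose b : ℝ) * (1 - 1 / κ) ^ b * (1 / κ) ^ (ℓ - b) *
              (((ℓ - b).choose k : ℝ) * (b.choose l : ℝ) * q ^ k * (1 - q) ^ (ℓ - b - k) *
                (q / ((κ : ℝ) - 1)) ^ l * (1 - q / ((κ : ℝ) - 1)) ^ (b - l))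
            = ((ℓ.choose b : ℝ) * ((ℓ - b).choose k : ℝ) * (b.choose l : ℝ)) *
              ((1 - 1 / (κ : ℝ)) ^ b * (1 / (κ : ℝ)) ^ (ℓ - b) *
                (q ^ k * (q / ((κ : ℝ) - 1)) ^ l)) *
              ((1 - q) ^ (ℓ - b - k) * (1 - q / ((κ : ℝ) - 1)) ^ (b - l)) := by ring
          _ = ((ℓ.choose c : ℝ) * ((ℓ - c).choose l : ℝ) * (c.choose k : ℝ)) *
              ((1 - 1 / (κ : ℝ)) ^ c * (1 / (κ : ℝ)) ^ (ℓ - c) *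
                (q ^ l * (q / ((κ : ℝ) - 1)) ^ k)) *
              ((1 - q) ^ (ℓ - b - k) * (1 - q / ((κ : ℝ) - 1)) ^ (b - l)) := by rw [hA, hB]
          _ = (ℓ.choose c : ℝ) * (1 - 1 / κ) ^ c * (1 / κ) ^ (ℓ - c) *
              (((ℓ - c).choose l : ℝ) * (c.choose k : ℝ) * q ^ l * (1 - q) ^ (ℓ - b - k) *
                (q / ((κ : ℝ) - 1)) ^ k * (1 - q / ((κ : ℝ) - 1)) ^ (b - l)) := by ring
      · have h1 : b.choose l = 0 := Nat.choose_eq_zero_of_lt (by omega)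
        have h2 : c.choose k = 0 := Nat.choose_eq_zero_of_lt (by omega)
        simp [h1, h2]
    · have h1 : (ℓ - b).choose k = 0 := Nat.choose_eq_zero_of_lt (by omega)
      have h2 : (ℓ - c).choose l = 0 := Nat.choose_eq_zero_of_lt (by omega)
      simp [h1, h2]
  · simp

lemma binom_sum (q : ℝ) (n : ℕ) :
    ∑ k ∈ range (n + 1), (n.choose k : ℝ) * q ^ k * (1 - q) ^ (n - k) = 1 := by
  have h : (q + (1 - q)) ^ n = ∑ k ∈ range (n + 1), q ^ k * (1 - q) ^ (n - k) * (n.choose k : ℝ) :=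
    add_pow q (1 - q) n
  have h2 : (q + (1 - q) : ℝ) = 1 := by ring
  rw [h2, one_pow] at h
  refine Eq.trans ?_ h.symm
  apply Finset.sum_congr rfl
  intros; ring

lemma MH_row_sum (κ ℓ : ℕ) (q : ℝ) {b : ℕ} (hb : b ≤ ℓ) :
    ∑ c ∈ range (ℓ + 1), MH κ ℓ q b c = 1 := by
  simp only [MH]
  rw [Finset.sum_comm]
  have step : ∀ k ∈ range (ℓ - b + 1), (∑ c ∈ range (ℓ + 1), ∑ l ∈ range (b + 1),
      if (k : ℤ) - (l : ℤ) = (c : ℤ) - (b : ℤ) then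
        ((ℓ - b).choose k : ℝ) * (b.choose l : ℝ) * q ^ k * (1 - q) ^ (ℓ - b - k) *
          (q / ((κ : ℝ) - 1)) ^ l * (1 - q / ((κ : ℝ) - 1)) ^ (b - l)
      else 0)
      = ∑ l ∈ range (b + 1),
        ((ℓ - b).choose k : ℝ) * (b.choose l : ℝ) * q ^ k * (1 - q) ^ (ℓ - b - k) *
          (q / ((κ : ℝ) - 1)) ^ l * (1 - q / ((κ : ℝ) - 1)) ^ (b - l) := by
    intro k hk
    have hkb : k ≤ ℓ - b := by have := mem_range.1 hk; omega
    rw [Finset.sum_comm]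
    apply Finset.sum_congr rfl
    intro l hl
    have hlb : l ≤ b := by have := mem_range.1 hl; omega
    rw [Finset.sum_eq_single (b + k - l)]
    · rw [if_pos (by omega)]
    · intro c _ hne
      rw [if_neg (by omega)]
    · intro habs
      exact absurd (mem_range.2 (by omega)) habs
  rw [Finset.sum_congr rfl step]
  have expand : ∀ k ∈ range (ℓ - b + 1), (∑ l ∈ range (b + 1),
        ((ℓ - b).choose k : ℝ) * (b.choose l : ℝ) * q ^ k * (1 - q) ^ (ℓ - b - k) *
          (q / ((κ : ℝ) - 1)) ^ l * (1 - q / ((κ : ℝ) - 1)) ^ (b - l))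
      = (((ℓ - b).choose k : ℝ) * q ^ k * (1 - q) ^ (ℓ - b - k)) *
        ∑ l ∈ range (b + 1), ((b.choose l : ℝ) * (q / ((κ : ℝ) - 1)) ^ l *
          (1 - q / ((κ : ℝ) - 1)) ^ (b - l)) := by
    intro k _
    rw [Finset.mul_sum]
    apply Finset.sum_congr rfl
    intros; ring
  rw [Finset.sum_congr rfl expand, binom_sum (q / ((κ : ℝ) - 1)) b]
  simp only [mul_one]
  exact binom_sum q (ℓ - b)

lemma MH_nonneg (κ ℓ : ℕ) (q : ℝ) (hκ : 2 ≤ κ) (hq0 : 0 ≤ q) (hq1 : q ≤ 1) (b c : ℕ) :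
    0 ≤ MH κ ℓ q b c := by
  have hκR : (2 : ℝ) ≤ (κ : ℝ) := by exact_mod_cast hκ
  have hp0 : 0 ≤ q / ((κ : ℝ) - 1) := by
    apply div_nonneg hq0; linarith
  have hp1 : q / ((κ : ℝ) - 1) ≤ 1 := by
    rw [div_le_one (by linarith)]; linarith
  apply Finset.sum_nonneg
  intro k _
  apply Finset.sum_nonneg
  intro l _
  split_ifs
  · have h1 : (0:ℝ) ≤ ((ℓ - b).choose k : ℝ) := Nat.cast_nonneg _
    have h2 : (0:ℝ) ≤ (b.choose l : ℝ) := Nat.cast_nonneg _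
    have h3 : (0:ℝ) ≤ 1 - q := by linarith
    have h4 : (0:ℝ) ≤ 1 - q / ((κ : ℝ) - 1) := by linarith
    positivity
  · exact le_refl 0

lemma MHpow_nonneg (κ ℓ : ℕ) (q : ℝ) (hκ : 2 ≤ κ) (hq0 : 0 ≤ q) (hq1 : q ≤ 1)
    (n b c : ℕ) : 0 ≤ MHpow κ ℓ q n b c := by
  induction n generalizing b c with
  | zero => simp only [MHpow]; split_ifs <;> norm_num
  | succ n ih =>
      simp only [MHpow]
      apply Finset.sum_nonneg
      intro k _
      exact mul_nonneg (ih b k) (MH_nonneg κ ℓ q hκ hq0 hq1 k c)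

lemma MHpow_row_sum (κ ℓ : ℕ) (q : ℝ) (n : ℕ) {b : ℕ} (hb : b ≤ ℓ) :
    ∑ c ∈ range (ℓ + 1), MHpow κ ℓ q n b c = 1 := by
  induction n generalizing b with
  | zero =>
      simp only [MHpow]
      rw [Finset.sum_ite_eq (range (ℓ + 1)) b (fun _ => (1:ℝ))]
      rw [if_pos (mem_range.2 (by omega))]
  | succ n ih =>
      simp only [MHpow]
      rw [Finset.sum_comm]
      have : ∀ k ∈ range (ℓ + 1), ∑ c ∈ range (ℓ + 1), MHpow κ ℓ q n b k * MH κ ℓ q k c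
          = MHpow κ ℓ q n b k := by
        intro k hk
        rw [← Finset.mul_sum, MH_row_sum κ ℓ q (by have := mem_range.1 hk; omega), mul_one]
      rw [Finset.sum_congr rfl this]
      exact ih hb

lemma MHpow_succ_left (κ ℓ : ℕ) (q : ℝ) (n : ℕ) {b c : ℕ} (hb : b ≤ ℓ) (hc : c ≤ ℓ) :
    MHpow κ ℓ q (n + 1) b c = ∑ k ∈ range (ℓ + 1), MH κ ℓ q b k * MHpow κ ℓ q n k c := by
  induction n generalizing b c with
  | zero =>
      simp only [MHpow]
      rw [Finset.sum_eq_single b]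
      · rw [if_pos rfl, one_mul]
        rw [Finset.sum_eq_single c]
        · rw [if_pos rfl, mul_one]
        · intro k _ hne; rw [if_neg hne, mul_zero]
        · intro habs; exact absurd (mem_range.2 (by omega)) habs
      · intro k _ hne; rw [if_neg (Ne.symm hne), zero_mul]
      · intro habs; exact absurd (mem_range.2 (by omega)) habs
  | succ n ih =>
      calc MHpow κ ℓ q (n + 2) b c
          = ∑ k ∈ range (ℓ + 1), MHpow κ ℓ q (n + 1) b k * MH κ ℓ q k c := rfl
        _ = ∑ k ∈ range (ℓ + 1), (∑ j ∈ range (ℓ + 1), MH κ ℓ q b j * MHpow κ ℓ q n j k)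
              * MH κ ℓ q k c := by
            apply Finset.sum_congr rfl
            intro k hk
            rw [ih hb (by have := mem_range.1 hk; omega)]
        _ = ∑ j ∈ range (ℓ + 1), MH κ ℓ q b j *
              ∑ k ∈ range (ℓ + 1), MHpow κ ℓ q n j k * MH κ ℓ q k c := by
            simp only [Finset.sum_mul]
            rw [Finset.sum_comm]
            apply Finset.sum_congr rfl
            intro j _
            rw [Finset.mul_sum]
            apply Finset.sum_congr rfl
            intros; ring
        _ = ∑ j ∈ range (ℓ + 1), MH κ ℓ q b j * MHpow κ ℓ q (n + 1) j c := rfl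

lemma MHpow_rev (κ ℓ : ℕ) (q : ℝ) (hκ : 2 ≤ κ) (n : ℕ) {b c : ℕ} (hb : b ≤ ℓ) (hc : c ≤ ℓ) :
    Bbin κ ℓ b * MHpow κ ℓ q n b c = Bbin κ ℓ c * MHpow κ ℓ q n c b := by
  induction n generalizing b c with
  | zero =>
      simp only [MHpow]
      by_cases h : b = c
      · subst h; simp
      · rw [if_neg h, if_neg (Ne.symm h), mul_zero, mul_zero]
  | succ n ih =>
      rw [MHpow_succ_left κ ℓ q n hb hc]
      calc Bbin κ ℓ b * ∑ k ∈ range (ℓ + 1), MH κ ℓ q b k * MHpow κ ℓ q n k c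
          = ∑ k ∈ range (ℓ + 1), (Bbin κ ℓ b * MH κ ℓ q b k) * MHpow κ ℓ q n k c := by
            rw [Finset.mul_sum]; apply Finset.sum_congr rfl; intros; ring
        _ = ∑ k ∈ range (ℓ + 1), MH κ ℓ q k b * (Bbin κ ℓ k * MHpow κ ℓ q n k c) := by
            apply Finset.sum_congr rfl
            intro k hk
            rw [MH_rev κ ℓ q hκ hb (by have := mem_range.1 hk; omega)]
            ring
        _ = ∑ k ∈ range (ℓ + 1), MH κ ℓ q k b * (Bbin κ ℓ c * MHpow κ ℓ q n c k) := by
            apply Finset.sum_congr rfl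
            intro k hk
            rw [ih (by have := mem_range.1 hk; omega) hc]
        _ = Bbin κ ℓ c * ∑ k ∈ range (ℓ + 1), MHpow κ ℓ q n c k * MH κ ℓ q k b := by
            rw [Finset.mul_sum]; apply Finset.sum_congr rfl; intros; ring
        _ = Bbin κ ℓ c * MHpow κ ℓ q (n + 1) c b := rfl

lemma Bbin_pos (κ ℓ : ℕ) (hκ : 2 ≤ κ) {b : ℕ} (hb : b ≤ ℓ) : 0 < Bbin κ ℓ b := by
  have hκR : (2 : ℝ) ≤ (κ : ℝ) := by exact_mod_cast hκ
  have h1 : (0:ℝ) < (ℓ.choose b : ℝ) := by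
    exact_mod_cast Nat.choose_pos hb
  have h2 : (0:ℝ) < 1 - 1 / (κ : ℝ) := by
    rw [sub_pos, div_lt_iff₀ (by linarith)]; linarith
  have h3 : (0:ℝ) < 1 / (κ : ℝ) := by positivity
  rw [Bbin]; positivity

/-- Upper bound on the probability of reaching Hamming class `0`:
`(M_H^n)(b,0) ≤ ℬ(0)/ℬ(b)`. -/
theorem MHpow_hit_zero_le (κ ℓ : ℕ) (hκ : 2 ≤ κ) (hℓ : 1 ≤ ℓ)
    (q : ℝ) (hq0 : 0 < q) (hq1 : q < 1 - 1 / κ)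
    (n b : ℕ) (hb : b ≤ ℓ) :
    MHpow κ ℓ q n b 0 ≤ Bbin κ ℓ 0 / Bbin κ ℓ b := by
  have hκR : (2 : ℝ) ≤ (κ : ℝ) := by exact_mod_cast hκ
  have hq1' : q ≤ 1 := by
    have : (0:ℝ) < 1 / (κ : ℝ) := by positivity
    linarith
  have hBb := Bbin_pos κ ℓ hκ hb
  have hB0 := Bbin_pos κ ℓ hκ (Nat.zero_le ℓ)
  rw [le_div_iff₀ hBb]
  have hrev := MHpow_rev κ ℓ q hκ n hb (Nat.zero_le ℓ)
  have hle1 : MHpow κ ℓ q n 0 b ≤ 1 := by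
    have hrow := MHpow_row_sum κ ℓ q n (Nat.zero_le ℓ)
    rw [← hrow]
    apply Finset.single_le_sum (f := fun c => MHpow κ ℓ q n 0 c)
    · intro c _
      exact MHpow_nonneg κ ℓ q hκ hq0.le hq1' n 0 c
    · exact mem_range.2 (by omega)
  calc MHpow κ ℓ q n b 0 * Bbin κ ℓ b = Bbin κ ℓ b * MHpow κ ℓ q n b 0 := by ring
    _ = Bbin κ ℓ 0 * MHpow κ ℓ q n 0 b := hrev
    _ ≤ Bbin κ ℓ 0 * 1 := by
        apply mul_le_mul_of_nonneg_left hle1 hB0.le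
    _ = Bbin κ ℓ 0 := mul_one _
end
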